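/- arXiv:2111.09254 — 2 statements merged into one kernel-verified Lean document; each statement's English description precedes it below -/
import Mathlib

section
/- For γ ∈ (0,1) and μ ∈ ℝ, the one-dimensional Gaussian location mixture f(x) = γ·φ(x) + (1−γ)·φ(x−μ), where φ is the standard normal density, is log-concave if and only if |μ| ≤ 2. -/
noncomputable def stdNormalPDF (x : ℝ) : ℝ :=
  (Real.sqrt (2 * Real.pi))⁻¹ * Real.exp (-(x ^ 2) / 2)

/-! With `a = γ φ(x)` and `b = (1 - γ) φ(x - μ)`, the mixture `f = a + b` satisfies
`f f'' - f'² = (μ² - 2) a b - a² - b² = (μ² - 4) a b - (a - b)²`, and `log f` is concave iff this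
is `≤ 0` everywhere. For `μ² ≤ 4` both terms are nonpositive. For `μ² > 4` it is positive at a
point where `a = b`, which exists because `φ(x - μ) / φ(x) = exp (μ x - μ² / 2)` takes every
positive value. -/

open Real Set

lemma concaveOn_univ_iff_of_hasDerivAt {f f' f'' : ℝ → ℝ} (hf : ∀ x, HasDerivAt f (f' x) x)
    (hf' : ∀ x, HasDerivAt f' (f'' x) x) : ConcaveOn ℝ univ f ↔ ∀ x, f'' x ≤ 0 := by
  have hderiv : deriv f = f' := funext fun x => (hf x).deriv
  constructor
  · intro hconc x
    have hanti : Antitone f' := by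
      rw [← hderiv, ← antitoneOn_univ]
      exact hconc.antitoneOn_deriv fun x _ => (hf x).differentiableAt
    rw [← (hf' x).deriv]
    exact hanti.deriv_nonpos
  · intro hf''
    refine Antitone.concaveOn_univ_of_deriv (fun x => (hf x).differentiableAt) ?_
    rw [hderiv]
    exact antitone_of_hasDerivAt_nonpos hf' hf''

lemma concaveOn_univ_log_iff {F F' F'' : ℝ → ℝ} (hpos : ∀ x, 0 < F x)
    (hF : ∀ x, HasDerivAt F (F' x) x) (hF' : ∀ x, HasDerivAt F' (F'' x) x) :
    ConcaveOn ℝ univ (fun x => log (F x)) ↔ ∀ x, F x * F'' x - F' x ^ 2 ≤ 0 := by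
  rw [concaveOn_univ_iff_of_hasDerivAt (fun x => (hF x).log (hpos x).ne')
    (fun x => (hF' x).div (hF x) (hpos x).ne')]
  refine forall_congr' fun x => ?_
  rw [div_le_iff₀ (pow_pos (hpos x) 2), zero_mul]
  ring_nf

lemma stdNormalPDF_pos (x : ℝ) : 0 < stdNormalPDF x := by
  unfold stdNormalPDF
  have : 0 < √(2 * π) := sqrt_pos.2 (by positivity)
  positivity

lemma hasDerivAt_stdNormalPDF (x : ℝ) :
    HasDerivAt stdNormalPDF (-x * stdNormalPDF x) x := by
  have h := (((hasDerivAt_pow 2 x).neg.div_const 2).exp).const_mul (√(2 * π))⁻¹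
  refine h.congr_deriv ?_
  unfold stdNormalPDF
  simp only [Pi.neg_apply]
  ring

lemma stdNormalPDF_sub (x μ : ℝ) :
    stdNormalPDF (x - μ) = exp (μ * x - μ ^ 2 / 2) * stdNormalPDF x := by
  unfold stdNormalPDF
  rw [mul_left_comm, ← exp_add]
  ring_nf

lemma exists_mul_stdNormalPDF_eq {α β μ : ℝ} (hα : 0 < α) (hβ : 0 < β) (hμ : μ ≠ 0) :
    ∃ x, α * stdNormalPDF x = β * stdNormalPDF (x - μ) := by
  refine ⟨(log (α / β) + μ ^ 2 / 2) / μ, ?_⟩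
  rw [stdNormalPDF_sub, mul_div_cancel₀ _ hμ, add_sub_cancel_right, exp_log (by positivity)]
  field_simp

lemma hasDerivAt_neg_mul_stdNormalPDF (x : ℝ) :
    HasDerivAt (fun x => -x * stdNormalPDF x) ((x ^ 2 - 1) * stdNormalPDF x) x := by
  refine ((hasDerivAt_neg x).mul (hasDerivAt_stdNormalPDF x)).congr_deriv ?_
  ring

lemma concaveOn_log_gaussianMixture_iff_forall {α β μ : ℝ} (hα : 0 < α) (hβ : 0 < β) :
    ConcaveOn ℝ univ (fun x => log (α * stdNormalPDF x + β * stdNormalPDF (x - μ)))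
      ↔ ∀ x, (μ ^ 2 - 2) * (α * stdNormalPDF x) * (β * stdNormalPDF (x - μ))
          - (α * stdNormalPDF x) ^ 2 - (β * stdNormalPDF (x - μ)) ^ 2 ≤ 0 := by
  have hpos (x : ℝ) : 0 < α * stdNormalPDF x + β * stdNormalPDF (x - μ) := by
    have := stdNormalPDF_pos x
    have := stdNormalPDF_pos (x - μ)
    positivity
  rw [concaveOn_univ_log_iff hpos
    (fun x => ((hasDerivAt_stdNormalPDF x).const_mul α).add
      ((hasDerivAt_stdNormalPDF (x - μ)).comp_sub_const x μ |>.const_mul β))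
    (fun x => ((hasDerivAt_neg_mul_stdNormalPDF x).const_mul α).add
      ((hasDerivAt_neg_mul_stdNormalPDF (x - μ)).comp_sub_const x μ |>.const_mul β))]
  refine forall_congr' fun x => ?_
  ring_nf

theorem concaveOn_log_gaussianMixture_iff {α β μ : ℝ} (hα : 0 < α) (hβ : 0 < β) :
    ConcaveOn ℝ univ (fun x => log (α * stdNormalPDF x + β * stdNormalPDF (x - μ)))
      ↔ |μ| ≤ 2 := by
  have habs : |μ| ≤ 2 ↔ μ ^ 2 ≤ 4 := by
    rw [show (4 : ℝ) = 2 ^ 2 by norm_num, sq_le_sq, abs_two]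
  rw [concaveOn_log_gaussianMixture_iff_forall hα hβ, habs]
  constructor
  · intro h
    refine le_of_not_gt fun hμ => ?_
    have hμ0 : μ ≠ 0 := by
      rintro rfl
      norm_num at hμ
    obtain ⟨x₀, hx₀⟩ := exists_mul_stdNormalPDF_eq hα hβ hμ0
    have hx₀_nonpos := h x₀
    rw [← hx₀] at hx₀_nonpos
    have ha := mul_pos hα (stdNormalPDF_pos x₀)
    nlinarith [mul_pos (sub_pos.2 hμ) (mul_pos ha ha)]
  · intro hμ x
    have ha := mul_pos hα (stdNormalPDF_pos x)
    have hb := mul_pos hβ (stdNormalPDF_pos (x - μ))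
    nlinarith [sq_nonneg (α * stdNormalPDF x - β * stdNormalPDF (x - μ)), mul_pos ha hb]

theorem gaussian_mixture_logconcave_iff (γ μ : ℝ) (hγ : γ ∈ Set.Ioo (0:ℝ) 1) :
    ConcaveOn ℝ Set.univ
        (fun x => Real.log (γ * stdNormalPDF x + (1 - γ) * stdNormalPDF (x - μ)))
      ↔ |μ| ≤ 2 :=
  concaveOn_log_gaussianMixture_iff hγ.1 (sub_pos.2 hγ.2)
end

section
/- Let f be a log-concave probability density on ℝ and let F̄(x) = ∫ₓ^∞ f(t) dt be its survival function. Then F̄ is log-concave on the interior of its support. -/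
/-!
If `f` is log-concave then `f u * f (t + c) ≤ f (u + c) * f t` for `u ≤ t` and `c ≥ 0`.
Integrating this in `t` over `(m, ∞)` and then in `u` over `(m - c, m)` turns it into
`F̄(m - c) F̄(m + c) ≤ F̄(m)²`, i.e. `log F̄` is midpoint concave where `F̄ > 0`.
Since `F̄` is continuous, midpoint concavity upgrades to concavity.
-/

open MeasureTheory Set Real

lemma rpow_mul_rpow_one_sub {a : ℝ} (ha : 0 ≤ a) (θ : ℝ) : a ^ θ * a ^ (1 - θ) = a := by
  rw [← rpow_add' ha (by norm_num), add_sub_cancel, rpow_one]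

/-- At a minimum `u₀` of `φ`, the midpoint inequality for the nearer endpoint and its reflection
through `u₀` gives `φ u₀ ≥ φ u₀ / 2`. -/
lemma nonneg_of_midpoint_concave_Icc {φ : ℝ → ℝ} {a b : ℝ} (hab : a ≤ b)
    (hφ : ContinuousOn φ (Icc a b)) (ha : 0 ≤ φ a) (hb : 0 ≤ φ b)
    (hmid : ∀ u ∈ Icc a b, ∀ v ∈ Icc a b, (φ u + φ v) / 2 ≤ φ ((u + v) / 2))
    {u : ℝ} (hu : u ∈ Icc a b) : 0 ≤ φ u := by
  obtain ⟨u₀, hu₀, hmin⟩ := isCompact_Icc.exists_isMinOn (nonempty_Icc.2 hab) hφ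
  suffices 0 ≤ φ u₀ from this.trans (isMinOn_iff.1 hmin _ hu)
  rcases le_total u₀ ((a + b) / 2) with h | h
  · have hv : 2 * u₀ - a ∈ Icc a b := ⟨by linarith [hu₀.1], by linarith⟩
    have := hmid a (left_mem_Icc.2 hab) _ hv
    rw [show (a + (2 * u₀ - a)) / 2 = u₀ by ring] at this
    linarith [isMinOn_iff.1 hmin _ hv]
  · have hv : 2 * u₀ - b ∈ Icc a b := ⟨by linarith, by linarith [hu₀.2]⟩
    have := hmid b (right_mem_Icc.2 hab) _ hv
    rw [show (b + (2 * u₀ - b)) / 2 = u₀ by ring] at this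
    linarith [isMinOn_iff.1 hmin _ hv]

theorem concaveOn_of_continuousOn_of_midpoint {s : Set ℝ} {g : ℝ → ℝ} (hs : Convex ℝ s)
    (hg : ContinuousOn g s)
    (hmid : ∀ x ∈ s, ∀ y ∈ s, (g x + g y) / 2 ≤ g ((x + y) / 2)) : ConcaveOn ℝ s g := by
  refine ⟨hs, fun x hx y hy a b ha hb hab => ?_⟩
  let p : ℝ → ℝ := fun u => u * x + (1 - u) * y
  let φ : ℝ → ℝ := fun u => g (p u) - (u * g x + (1 - u) * g y)
  have hp : MapsTo p (Icc 0 1) s := fun u hu =>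
    hs hx hy hu.1 (sub_nonneg.2 hu.2) (add_sub_cancel u 1)
  have hφ : ContinuousOn φ (Icc 0 1) :=
    (hg.comp (by fun_prop) hp).sub (by fun_prop)
  have hφmid : ∀ u ∈ Icc (0 : ℝ) 1, ∀ v ∈ Icc (0 : ℝ) 1, (φ u + φ v) / 2 ≤ φ ((u + v) / 2) := by
    intro u hu v hv
    have hpm : p ((u + v) / 2) = (p u + p v) / 2 := by ring
    have := hmid _ (hp hu) _ (hp hv)
    simp only [φ, hpm]
    linarith
  have := nonneg_of_midpoint_concave_Icc zero_le_one hφ (by simp [φ, p]) (by simp [φ, p])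
    hφmid ⟨ha, by linarith⟩
  obtain rfl : b = 1 - a := by linarith
  simpa [φ, p] using this

/-- Log-concavity in multiplicative form, so that `f` may vanish. -/
def IsLogConcave (f : ℝ → ℝ) : Prop :=
  ∀ x y θ : ℝ, θ ∈ Icc (0 : ℝ) 1 → f x ^ θ * f y ^ (1 - θ) ≤ f (θ * x + (1 - θ) * y)

noncomputable def tailIntegral (f : ℝ → ℝ) (t : ℝ) : ℝ := ∫ s in Ioi t, f s

section TailIntegral

variable {f : ℝ → ℝ}

lemma tailIntegral_nonneg (hf0 : ∀ x, 0 ≤ f x) (t : ℝ) : 0 ≤ tailIntegral f t :=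
  setIntegral_nonneg measurableSet_Ioi fun x _ => hf0 x

lemma antitone_tailIntegral (hf0 : ∀ x, 0 ≤ f x) (hfi : Integrable f) :
    Antitone (tailIntegral f) := fun _ _ hab =>
  setIntegral_mono_set hfi.integrableOn (.of_forall hf0) (Ioi_subset_Ioi hab).eventuallyLE

lemma intervalIntegral_add_tailIntegral (hfi : Integrable f) (a b : ℝ) :
    (∫ s in a..b, f s) + tailIntegral f b = tailIntegral f a :=
  intervalIntegral.integral_interval_add_Ioi' hfi.intervalIntegrable hfi.integrableOn

lemma continuous_tailIntegral (hfi : Integrable f) : Continuous (tailIntegral f) := by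
  have h : tailIntegral f = fun t => tailIntegral f 0 - ∫ s in (0 : ℝ)..t, f s := by
    ext t
    rw [← intervalIntegral_add_tailIntegral hfi 0 t]
    ring
  rw [h]
  exact continuous_const.sub (hfi.continuous_primitive 0)

lemma tailIntegral_add (f : ℝ → ℝ) (t c : ℝ) :
    tailIntegral f (t + c) = ∫ s in Ioi t, f (s + c) := by
  rw [tailIntegral, ← (measurePreserving_add_right volume c).setIntegral_preimage_emb
    (measurableEmbedding_addRight c) f, preimage_add_const_Ioi, add_sub_cancel_right]

end TailIntegral

namespace IsLogConcave

variable {f : ℝ → ℝ}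

/-- `t` and `u + c` are convex combinations of `u` and `t + c` with complementary weights. -/
lemma mul_le_mul_add (hf : IsLogConcave f) (hf0 : ∀ x, 0 ≤ f x) {u t c : ℝ} (hut : u ≤ t)
    (hc : 0 ≤ c) : f u * f (t + c) ≤ f (u + c) * f t := by
  rcases (show u ≤ t + c by linarith).eq_or_lt with h | h
  · obtain rfl : c = 0 := by linarith
    obtain rfl : t = u := by linarith
    rw [add_zero, mul_comm]
  set θ := c / (t + c - u)
  have hθ : θ ∈ Icc (0 : ℝ) 1 :=
    ⟨div_nonneg hc (by linarith), (div_le_one (by linarith)).2 (by linarith)⟩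
  have ht := hf u (t + c) θ hθ
  have huc := hf (t + c) u θ hθ
  have hd : t + c - u ≠ 0 := by linarith
  rw [show θ * u + (1 - θ) * (t + c) = t by simp only [θ]; field_simp; ring] at ht
  rw [show θ * (t + c) + (1 - θ) * u = u + c by simp only [θ]; field_simp; ring] at huc
  calc f u * f (t + c)
      = (f u ^ θ * f u ^ (1 - θ)) * (f (t + c) ^ θ * f (t + c) ^ (1 - θ)) := by
        rw [rpow_mul_rpow_one_sub (hf0 u), rpow_mul_rpow_one_sub (hf0 _)]
    _ = (f (t + c) ^ θ * f u ^ (1 - θ)) * (f u ^ θ * f (t + c) ^ (1 - θ)) := by ring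
    _ ≤ f (u + c) * f t := mul_le_mul huc ht
        (mul_nonneg (rpow_nonneg (hf0 _) _) (rpow_nonneg (hf0 _) _)) (hf0 _)

lemma mul_tailIntegral_le (hf : IsLogConcave f) (hf0 : ∀ x, 0 ≤ f x) (hfi : Integrable f)
    {u m c : ℝ} (hum : u ≤ m) (hc : 0 ≤ c) :
    f u * tailIntegral f (m + c) ≤ f (u + c) * tailIntegral f m := by
  rw [tailIntegral_add, tailIntegral, ← integral_const_mul, ← integral_const_mul]
  refine setIntegral_mono_on ((hfi.comp_add_right c).const_mul _).integrableOn
    (hfi.const_mul _).integrableOn measurableSet_Ioi fun t ht => ?_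
  exact hf.mul_le_mul_add hf0 (hum.trans (le_of_lt ht)) hc

lemma tailIntegral_mul_le_sq (hf : IsLogConcave f) (hf0 : ∀ x, 0 ≤ f x) (hfi : Integrable f)
    (m c : ℝ) : tailIntegral f (m - c) * tailIntegral f (m + c) ≤ tailIntegral f m ^ 2 := by
  wlog hc : 0 ≤ c generalizing c
  · simpa [← sub_eq_add_neg, mul_comm] using this (-c) (by linarith)
  have hint : ∫ u in (m - c)..m, f u * tailIntegral f (m + c)
      ≤ ∫ u in (m - c)..m, f (u + c) * tailIntegral f m :=
    intervalIntegral.integral_mono_on (by linarith)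
      (hfi.intervalIntegrable.mul_const _) ((hfi.comp_add_right c).intervalIntegrable.mul_const _)
      fun u hu => hf.mul_tailIntegral_le hf0 hfi hu.2 hc
  rw [intervalIntegral.integral_mul_const, intervalIntegral.integral_mul_const,
    intervalIntegral.integral_comp_add_right (fun u => f u), sub_add_cancel] at hint
  calc tailIntegral f (m - c) * tailIntegral f (m + c)
      = (∫ u in (m - c)..m, f u) * tailIntegral f (m + c)
          + tailIntegral f m * tailIntegral f (m + c) := by
        rw [← intervalIntegral_add_tailIntegral hfi (m - c) m]; ring
    _ ≤ (∫ u in m..(m + c), f u) * tailIntegral f m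
          + tailIntegral f m * tailIntegral f (m + c) := by gcongr
    _ = tailIntegral f m ^ 2 := by
        rw [sq, ← intervalIntegral_add_tailIntegral hfi m (m + c)]; ring

theorem concaveOn_log_tailIntegral (hf : IsLogConcave f) (hf0 : ∀ x, 0 ≤ f x)
    (hfi : Integrable f) :
    ConcaveOn ℝ {t | 0 < tailIntegral f t} (fun t => log (tailIntegral f t)) := by
  have hlower : IsLowerSet {t | 0 < tailIntegral f t} := fun _ _ hab ha =>
    ha.trans_le (antitone_tailIntegral hf0 hfi hab)
  refine concaveOn_of_continuousOn_of_midpoint hlower.ordConnected.convex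
    ((continuous_tailIntegral hfi).continuousOn.log fun t ht => ht.ne') fun x hx y hy => ?_
  have hsq := hf.tailIntegral_mul_le_sq hf0 hfi ((x + y) / 2) ((y - x) / 2)
  rw [show (x + y) / 2 - (y - x) / 2 = x by ring, show (x + y) / 2 + (y - x) / 2 = y by ring]
    at hsq
  have hlog := log_le_log (mul_pos hx hy) hsq
  rw [log_mul hx.ne' hy.ne', log_pow] at hlog
  push_cast at hlog
  linarith

end IsLogConcave

lemma rpow_mul_rpow_le_of_concaveOn_log {s : Set ℝ} {G : ℝ → ℝ} (hG : ∀ t ∈ s, 0 < G t)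
    (h : ConcaveOn ℝ s (fun t => log (G t))) {x y θ : ℝ} (hx : x ∈ s) (hy : y ∈ s)
    (hθ : θ ∈ Icc (0 : ℝ) 1) : G x ^ θ * G y ^ (1 - θ) ≤ G (θ * x + (1 - θ) * y) := by
  have hz : θ * x + (1 - θ) * y ∈ s :=
    h.1 hx hy hθ.1 (sub_nonneg.2 hθ.2) (add_sub_cancel θ 1)
  have hconc := h.2 hx hy hθ.1 (sub_nonneg.2 hθ.2) (add_sub_cancel θ 1)
  simp only [smul_eq_mul] at hconc
  rw [rpow_def_of_pos (hG x hx), rpow_def_of_pos (hG y hy), ← exp_add, ← exp_log (hG _ hz)]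
  exact exp_le_exp.2 (by linarith)

theorem survival_function_logconcave_general (f : ℝ → ℝ)
    (hf0 : ∀ x, 0 ≤ f x)
    (hfi : Integrable f)
    (hlc : ∀ x y θ : ℝ, θ ∈ Set.Icc (0:ℝ) 1 →
      f x ^ θ * f y ^ (1 - θ) ≤ f (θ * x + (1 - θ) * y)) :
    ∀ x ∈ interior (Function.support fun t => ∫ s in Set.Ioi t, f s),
    ∀ y ∈ interior (Function.support fun t => ∫ s in Set.Ioi t, f s),
    ∀ θ : ℝ, θ ∈ Set.Icc (0:ℝ) 1 →
      (∫ s in Set.Ioi x, f s) ^ θ * (∫ s in Set.Ioi y, f s) ^ (1 - θ)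
        ≤ ∫ s in Set.Ioi (θ * x + (1 - θ) * y), f s := by
  intro x hx y hy θ hθ
  have hpos : ∀ t ∈ Function.support (tailIntegral f), 0 < tailIntegral f t :=
    fun t ht => (tailIntegral_nonneg hf0 t).lt_of_ne' ht
  exact rpow_mul_rpow_le_of_concaveOn_log (s := {t | 0 < tailIntegral f t}) (fun _ ht => ht)
    (IsLogConcave.concaveOn_log_tailIntegral hlc hf0 hfi)
    (hpos x (interior_subset hx)) (hpos y (interior_subset hy)) hθ

theorem survival_function_logconcave (f : ℝ → ℝ)
    (hf0 : ∀ x, 0 ≤ f x) (hfm : Measurable f)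
    (hfi : Integrable f) (hf1 : ∫ x, f x = 1)
    (hlc : ∀ x y θ : ℝ, θ ∈ Set.Icc (0:ℝ) 1 →
      f x ^ θ * f y ^ (1 - θ) ≤ f (θ * x + (1 - θ) * y)) :
    ∀ x ∈ interior (Function.support fun t => ∫ s in Set.Ioi t, f s),
    ∀ y ∈ interior (Function.support fun t => ∫ s in Set.Ioi t, f s),
    ∀ θ : ℝ, θ ∈ Set.Icc (0:ℝ) 1 →
      (∫ s in Set.Ioi x, f s) ^ θ * (∫ s in Set.Ioi y, f s) ^ (1 - θ)
        ≤ ∫ s in Set.Ioi (θ * x + (1 - θ) * y), f s :=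
  survival_function_logconcave_general f hf0 hfi hlc
end
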